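/- arXiv:2409.13420 — 2 statements merged into one kernel-verified Lean document; each statement's English description precedes it below -/
import Mathlib

section
/- Let $X, V$ be Banach spaces and $G: X \to V$ be continuously Fréchet differentiable such that $DG(x): X \to V$ is an isomorphism for every $x$ with $\|DG(x)\|_{X\to V} \leq C_1$ and $\|DG(x)^{-1}\|_{V\to X} \leq C_{-1}$ uniformly in $x$. Then for all $x, y \in X$: $C_1^{-1} \|G(x)-G(y)\|_V \leq \|x-y\|_X \leq C_{-1} \|G(x)-G(y)\|_V$. -/
/-!
The upper bound is the mean value inequality. For the lower bound, `G` is a local homeomorphism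
by the inverse function theorem, and a continuous lift `c` of a path `σ` through `G` has
derivative `DG(c)⁻¹ σ'`, hence speed at most `C₋₁ ‖σ'‖`. With this speed bound and completeness
of `X`, the lift starting at `y` of every segment `s ↦ G y + s • (v - G y)` continues to all of
`[0, 1]`. Its endpoint `Ψ v` depends continuously on `v` (lifts through a separated local
homeomorphism are jointly continuous in parameters), so `Ψ` is a continuous right inverse of `G`
with `Ψ (G y) = y`. As `X` is connected and `G` is locally injective, `Ψ ∘ G = id`, whence
`‖x - y‖ = ‖Ψ (G x) - y‖ ≤ C₋₁ ‖G x - G y‖`.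
-/

open Set Filter Topology
open scoped NNReal

theorem UniformContinuousOn.cauchy_map {α β : Type*} [UniformSpace α] [UniformSpace β]
    {f : α → β} {s : Set α} {l : Filter α} (hf : UniformContinuousOn f s) (hl : Cauchy l)
    (hs : s ∈ l) : Cauchy (l.map f) := by
  refine ⟨hl.1.map f, ?_⟩
  rw [prod_map_map_eq]
  exact hf.mono_left (le_inf hl.2 (le_principal_iff.2 (prod_mem_prod hs hs)))

theorem LipschitzOnWith.exists_tendsto_nhdsWithin {α β : Type*} [PseudoMetricSpace α]
    [PseudoMetricSpace β] [CompleteSpace β] {f : α → β} {s : Set α} {K : ℝ≥0} {a : α}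
    (hf : LipschitzOnWith K f s) (ha : a ∈ closure s) : ∃ z, Tendsto f (𝓝[s] a) (𝓝 z) := by
  have := mem_closure_iff_nhdsWithin_neBot.1 ha
  exact cauchy_map_iff_exists_tendsto.1 <|
    hf.uniformContinuousOn.cauchy_map (cauchy_nhds.mono' ‹_› nhdsWithin_le_nhds)
      self_mem_nhdsWithin

theorem Real.eq_univ_of_forall_Iio_subset_exists_gt {S : Set ℝ} (hne : S.Nonempty)
    (hdown : ∀ t ∈ S, ∀ t' ≤ t, t' ∈ S) (hstep : ∀ T, Iio T ⊆ S → ∃ t > T, t ∈ S) :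
    S = univ := by
  refine eq_univ_of_forall fun b => by_contra fun hb => ?_
  have hbdd : BddAbove S := ⟨b, fun t ht => le_of_not_ge fun hbt => hb (hdown t ht b hbt)⟩
  obtain ⟨t, hT, ht⟩ := hstep (sSup S) fun t' ht' => by
    obtain ⟨t, ht, hlt⟩ := exists_lt_of_lt_csSup hne ht'
    exact hdown t ht t' hlt.le
  exact (le_csSup hbdd ht).not_gt hT

section Lift

variable {E B : Type*} [TopologicalSpace E] {p : E → B} {σ : ℝ → B}
  {c c₁ c₂ : ℝ → E} {s : Set ℝ}

def IsLiftOn (p : E → B) (σ : ℝ → B) (c : ℝ → E) (s : Set ℝ) : Prop :=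
  ContinuousOn c s ∧ ∀ t ∈ s, p (c t) = σ t

theorem IsLiftOn.mono {s' : Set ℝ} (hc : IsLiftOn p σ c s) (h : s' ⊆ s) : IsLiftOn p σ c s' :=
  ⟨hc.1.mono h, fun t ht => hc.2 t (h ht)⟩

theorem IsLiftOn.congr {c' : ℝ → E} (hc : IsLiftOn p σ c s) (h : EqOn c' c s) :
    IsLiftOn p σ c' s :=
  ⟨hc.1.congr h, fun t ht => (congrArg p (h ht)).trans (hc.2 t ht)⟩

variable [TopologicalSpace B]

theorem IsLiftOn.eqOn [T2Space E] (hp : IsLocalHomeomorph p) (h₁ : IsLiftOn p σ c₁ s)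
    (h₂ : IsLiftOn p σ c₂ s) (hs : IsPreconnected s) {a : ℝ} (ha : a ∈ s) (h : c₁ a = c₂ a) :
    EqOn c₁ c₂ s :=
  (T2Space.isSeparatedMap p).eqOn_of_comp_eqOn hp.isLocallyInjective hs h₁.1 h₂.1
    (fun t ht => (h₁.2 t ht).trans (h₂.2 t ht).symm) ha h

theorem IsLiftOn.extend {t₀ t₁ : ℝ} (hc : IsLiftOn p σ c (Icc 0 t₀)) (ht₀ : 0 ≤ t₀)
    {e : OpenPartialHomeomorph E B} (hpe : p = e) (hce : c t₀ ∈ e.source)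
    (hσ : ContinuousOn σ (Icc t₀ t₁)) (hσe : MapsTo σ (Icc t₀ t₁) e.target) :
    ∃ c', c' 0 = c 0 ∧ IsLiftOn p σ c' (Icc 0 t₁) := by
  have hjoin : c t₀ = e.symm (σ t₀) := by
    rw [← hc.2 t₀ ⟨ht₀, le_rfl⟩, hpe, e.left_inv hce]
  refine ⟨fun t => if t ≤ t₀ then c t else e.symm (σ t), if_pos ht₀, ?_, fun t ht => ?_⟩
  · refine ContinuousOn.mono ?_ (fun t ht => (le_or_gt t t₀).imp (fun h => ⟨ht.1, h⟩)
      (fun h => ⟨h.le, ht.2⟩) : Icc 0 t₁ ⊆ Icc 0 t₀ ∪ Icc t₀ t₁)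
    refine ContinuousOn.union_of_isClosed ?_ ?_ isClosed_Icc isClosed_Icc
    · exact hc.1.congr fun t ht => if_pos ht.2
    · refine (e.continuousOn_symm.comp hσ hσe).congr fun t ht => ?_
      rcases ht.1.eq_or_lt with rfl | h
      · simp [hjoin]
      · simp [not_le.2 h]
  · by_cases h : t ≤ t₀
    · simpa only [if_pos h] using hc.2 t ⟨ht.1, h⟩
    · simp only [if_neg h, hpe]
      exact e.right_inv (hσe ⟨(not_le.1 h).le, ht.2⟩)

theorem IsLiftOn.exists_gt (hp : IsLocalHomeomorph p) (hσ : Continuous σ) {t₀ : ℝ}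
    (hc : IsLiftOn p σ c (Icc 0 t₀)) (ht₀ : 0 ≤ t₀) :
    ∃ t₁ > t₀, ∃ c', c' 0 = c 0 ∧ IsLiftOn p σ c' (Icc 0 t₁) := by
  obtain ⟨e, hce, hpe⟩ := hp (c t₀)
  have hσe : σ t₀ ∈ e.target := by
    rw [← hc.2 t₀ ⟨ht₀, le_rfl⟩, hpe]
    exact e.map_source hce
  obtain ⟨l, u, ⟨hl, hu⟩, hsub⟩ := mem_nhds_iff_exists_Ioo_subset.1
    (hσ.continuousAt.preimage_mem_nhds (e.open_target.mem_nhds hσe))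
  exact ⟨(t₀ + u) / 2, by linarith, hc.extend ht₀ hpe hce hσ.continuousOn
    fun t ht => hsub ⟨by linarith [ht.1], by linarith [ht.2]⟩⟩

theorem IsLocalHomeomorph.exists_isLiftOn_of_forall_lt [T2Space E] (hp : IsLocalHomeomorph p)
    {e₀ : E} {T : ℝ} (hT : 0 < T) (h : ∀ t < T, ∃ c, c 0 = e₀ ∧ IsLiftOn p σ c (Icc 0 t)) :
    ∃ c, c 0 = e₀ ∧ ∀ t < T, IsLiftOn p σ c (Icc 0 t) := by
  have : Nonempty E := ⟨e₀⟩
  choose! c hc0 hc using h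
  have hcoh : ∀ t < T, EqOn (fun s => c s s) (c t) (Icc 0 t) := fun t htT s hs =>
    (hc s (hs.2.trans_lt htT)).eqOn hp ((hc t htT).mono (Icc_subset_Icc_right hs.2))
      isPreconnected_Icc (left_mem_Icc.2 hs.1)
      ((hc0 _ (hs.2.trans_lt htT)).trans (hc0 t htT).symm) (right_mem_Icc.2 hs.1)
  exact ⟨fun s => c s s, hc0 0 hT, fun t htT => (hc t htT).congr (hcoh t htT)⟩

end Lift

section Existence

variable {E B : Type*} [MetricSpace E] [CompleteSpace E] [TopologicalSpace B] [T2Space B]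
  {p : E → B} {σ : ℝ → B}

/-- The lifts on `[0, t]`, `t < T`, glue to a map that is `K`-Lipschitz on `[0, T)`; by
completeness it has a limit at `T`, and a chart at that limit continues the lift beyond `T`. -/
theorem IsLocalHomeomorph.exists_gt_isLiftOn_of_forall_lt (hp : IsLocalHomeomorph p)
    (hσ : Continuous σ) {K : ℝ≥0}
    (hlip : ∀ t c, IsLiftOn p σ c (Icc 0 t) → LipschitzOnWith K c (Icc 0 t)) {e₀ : E} {T : ℝ}
    (hT : 0 < T) (h : ∀ t < T, ∃ c, c 0 = e₀ ∧ IsLiftOn p σ c (Icc 0 t)) :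
    ∃ t₁ > T, ∃ c, c 0 = e₀ ∧ IsLiftOn p σ c (Icc 0 t₁) := by
  obtain ⟨c, hc0, hc⟩ := hp.exists_isLiftOn_of_forall_lt hT h
  have hlipc : LipschitzOnWith K c (Ico 0 T) := fun u hu v hv =>
    hlip _ c (hc _ (max_lt hu.2 hv.2)) ⟨hu.1, le_max_left u v⟩ ⟨hv.1, le_max_right u v⟩
  have hTcl : T ∈ closure (Ico 0 T) := by
    rw [closure_Ico hT.ne]
    exact right_mem_Icc.2 hT.le
  have := mem_closure_iff_nhdsWithin_neBot.1 hTcl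
  obtain ⟨z, hz⟩ := hlipc.exists_tendsto_nhdsWithin hTcl
  have hpz : p z = σ T := by
    refine tendsto_nhds_unique ((hp.continuous.tendsto z).comp hz) ?_
    refine (hσ.continuousAt.tendsto.mono_left nhdsWithin_le_nhds).congr' ?_
    filter_upwards [self_mem_nhdsWithin] with s hs
    exact ((hc s hs.2).2 s (right_mem_Icc.2 hs.1)).symm
  obtain ⟨e, hze, hpe⟩ := hp z
  have hσe : σ T ∈ e.target := by
    rw [← hpz, hpe]
    exact e.map_source hze
  obtain ⟨l, u, ⟨hl, hu⟩, hsub⟩ := mem_nhds_iff_exists_Ioo_subset.1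
    (hσ.continuousAt.preimage_mem_nhds (e.open_target.mem_nhds hσe))
  obtain ⟨t₀, ht₀, hlt₀, hce⟩ := (eventually_mem_nhdsWithin.and <|
    (eventually_nhdsWithin_of_eventually_nhds (lt_mem_nhds hl)).and
      (hz.eventually (e.open_source.mem_nhds hze))).exists
  obtain ⟨c', hc'0, hc'⟩ := (hc t₀ ht₀.2).extend ht₀.1 hpe hce hσ.continuousOn
    (t₁ := (T + u) / 2) fun s hs => hsub ⟨by linarith [hs.1], by linarith [hs.2, ht₀.2]⟩
  exact ⟨(T + u) / 2, by linarith, c', hc'0.trans hc0, hc'⟩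

theorem IsLocalHomeomorph.exists_isLiftOn_Icc (hp : IsLocalHomeomorph p) (hσ : Continuous σ)
    {K : ℝ≥0} (hlip : ∀ t c, IsLiftOn p σ c (Icc 0 t) → LipschitzOnWith K c (Icc 0 t))
    {e₀ : E} (he₀ : p e₀ = σ 0) (t : ℝ) : ∃ c, c 0 = e₀ ∧ IsLiftOn p σ c (Icc 0 t) := by
  set S := {t : ℝ | ∃ c, c 0 = e₀ ∧ IsLiftOn p σ c (Icc 0 t)}
  have h0 : (0 : ℝ) ∈ S := ⟨fun _ => e₀, rfl, continuousOn_const,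
    fun t ht => by rw [le_antisymm ht.2 ht.1, he₀]⟩
  have hdown : ∀ t ∈ S, ∀ t' ≤ t, t' ∈ S := fun t ⟨c, hc0, hc⟩ t' ht' =>
    ⟨c, hc0, hc.mono (Icc_subset_Icc_right ht')⟩
  suffices hS : S = univ from eq_univ_iff_forall.1 hS t
  refine Real.eq_univ_of_forall_Iio_subset_exists_gt ⟨0, h0⟩ hdown fun T hT => ?_
  rcases le_or_gt T 0 with hT0 | hT0
  · obtain ⟨c, hc0, hc⟩ := h0
    obtain ⟨t₁, ht₁, c', hc'0, hc'⟩ := hc.exists_gt hp hσ le_rfl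
    exact ⟨t₁, hT0.trans_lt ht₁, c', hc'0.trans hc0, hc'⟩
  · exact hp.exists_gt_isLiftOn_of_forall_lt hσ hlip hT0 hT

end Existence

section Derivative

variable {X V : Type*} [NormedAddCommGroup X] [NormedSpace ℝ X] [NormedAddCommGroup V]
  [NormedSpace ℝ V] {G : X → V} {G' : X → X ≃L[ℝ] V}

theorem isLocalHomeomorph_of_hasStrictFDerivAt [CompleteSpace X]
    (hG : ∀ x, HasStrictFDerivAt G (G' x : X →L[ℝ] V) x) : IsLocalHomeomorph G :=
  fun x => ⟨(hG x).toOpenPartialHomeomorph G, (hG x).mem_toOpenPartialHomeomorph_source, rfl⟩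

theorem IsLiftOn.hasDerivWithinAt (hG : IsLocalHomeomorph G)
    (hderiv : ∀ x, HasFDerivAt G (G' x : X →L[ℝ] V) x) {σ : ℝ → V} {c : ℝ → X} {s : Set ℝ}
    {t : ℝ} {σ' : V} (hc : IsLiftOn G σ c s) (ht : t ∈ s) (hσ : HasDerivWithinAt σ σ' s t) :
    HasDerivWithinAt c ((G' (c t)).symm σ') s t := by
  obtain ⟨e, hce, hGe⟩ := hG (c t)
  have hσt : σ t = e (c t) := by rw [← hc.2 t ht, hGe]
  have hsymm : HasFDerivAt e.symm ((G' (c t)).symm : V →L[ℝ] X) (σ t) := by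
    rw [hσt]
    refine e.hasFDerivAt_symm (e.map_source hce) ?_
    rw [e.left_inv hce, ← hGe]
    exact hderiv _
  refine (hsymm.comp_hasDerivWithinAt t hσ).congr_of_eventuallyEq ?_ ?_
  · filter_upwards [eventually_mem_nhdsWithin,
      (hc.1.continuousWithinAt ht).eventually_mem (e.open_source.mem_nhds hce)] with u hu hue
    rw [Function.comp_apply, ← hc.2 u hu, hGe, e.left_inv hue]
  · rw [Function.comp_apply, hσt, e.left_inv hce]

theorem IsLiftOn.lipschitzOnWith (hG : IsLocalHomeomorph G)
    (hderiv : ∀ x, HasFDerivAt G (G' x : X →L[ℝ] V) x) {C L : ℝ≥0}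
    (hC : ∀ x, ‖((G' x).symm : V →L[ℝ] X)‖₊ ≤ C) {σ σ' : ℝ → V} {c : ℝ → X} {s : Set ℝ}
    (hc : IsLiftOn G σ c s) (hs : Convex ℝ s) (hσ : ∀ t ∈ s, HasDerivWithinAt σ (σ' t) s t)
    (hσ' : ∀ t ∈ s, ‖σ' t‖₊ ≤ L) : LipschitzOnWith (C * L) c s :=
  hs.lipschitzOnWith_of_nnnorm_hasDerivWithin_le
    (fun t ht => hc.hasDerivWithinAt hG hderiv ht (hσ t ht)) fun t ht =>
      (ContinuousLinearMap.le_opNNNorm _ _).trans (mul_le_mul' (hC _) (hσ' t ht))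

variable [CompleteSpace X]

theorem IsLocalHomeomorph.exists_continuous_rightInverse_of_hasFDerivAt
    (hG : IsLocalHomeomorph G) (hderiv : ∀ x, HasFDerivAt G (G' x : X →L[ℝ] V) x) {C : ℝ≥0}
    (hC : ∀ x, ‖((G' x).symm : V →L[ℝ] X)‖₊ ≤ C) (y : X) :
    ∃ Ψ : V → X, Continuous Ψ ∧ Function.RightInverse Ψ G ∧
      ∀ v, dist (Ψ v) y ≤ C * dist v (G y) := by
  set σ : V → ℝ → V := fun v s => G y + s • (v - G y)
  have hσ : ∀ v t, HasDerivAt (σ v) (v - G y) t := fun v t =>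
    (((hasDerivAt_id t).smul_const (v - G y)).const_add (G y)).congr_deriv (one_smul ℝ _)
  have hlip : ∀ v t c, IsLiftOn G (σ v) c (Icc 0 t) →
      LipschitzOnWith (C * ‖v - G y‖₊) c (Icc 0 t) := fun v t c hc =>
    hc.lipschitzOnWith hG hderiv hC (convex_Icc 0 t) (fun s _ => (hσ v s).hasDerivWithinAt)
      fun _ _ => le_rfl
  choose c hc0 hc using fun v => hG.exists_isLiftOn_Icc (by fun_prop) (hlip v)
    (by simp [σ] : G y = σ v 0) 1
  refine ⟨fun v => c v 1, ?_, fun v => by simpa [σ] using (hc v).2 1 ⟨zero_le_one, le_rfl⟩,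
    fun v => ?_⟩
  · let f : C(unitInterval × V, V) := ⟨fun q => σ q.2 q.1, by fun_prop⟩
    have hcont := hG.continuous_lift (T2Space.isSeparatedMap G) f (g := fun q => c q.2 q.1)
      (funext fun q => (hc q.2).2 q.1 q.1.2) (by simpa [hc0] using continuous_const)
      fun v => (hc v).1.comp_continuous continuous_subtype_val Subtype.prop
    exact hcont.comp (Continuous.prodMk_right 1)
  · have := (hlip v 1 (c v) (hc v)).dist_le_mul 1 ⟨zero_le_one, le_rfl⟩ 0 ⟨le_rfl, zero_le_one⟩
    simpa [hc0, dist_eq_norm] using this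

theorem IsLocalHomeomorph.antilipschitzWith_of_hasFDerivAt (hG : IsLocalHomeomorph G)
    (hderiv : ∀ x, HasFDerivAt G (G' x : X →L[ℝ] V) x) {C : ℝ≥0}
    (hC : ∀ x, ‖((G' x).symm : V →L[ℝ] X)‖₊ ≤ C) : AntilipschitzWith C G := by
  refine AntilipschitzWith.of_le_mul_dist fun x y => ?_
  obtain ⟨Ψ, hΨ, hGΨ, hdist⟩ := hG.exists_continuous_rightInverse_of_hasFDerivAt hderiv hC y
  have hΨG : Ψ ∘ G = id := (T2Space.isSeparatedMap G).eq_of_comp_eq hG.isLocallyInjective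
    (hΨ.comp hG.continuous) continuous_id (funext fun x => hGΨ (G x)) y
    (dist_le_zero.1 (by simpa using hdist (G y)))
  have := hdist (G x)
  rwa [← Function.comp_apply (f := Ψ), hΨG, id] at this

end Derivative

theorem stmt_11_general {X V : Type*} [NormedAddCommGroup X] [NormedSpace ℝ X] [CompleteSpace X]
    [NormedAddCommGroup V] [NormedSpace ℝ V]
    (G : X → V) (G' : X → X ≃L[ℝ] V)
    (hderiv : ∀ x, HasFDerivAt G (G' x : X →L[ℝ] V) x)
    (hcont : Continuous fun x => (G' x : X →L[ℝ] V))
    (C₁ Cinv : ℝ) (hC₁ : 0 < C₁)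
    (hbound : ∀ x, ‖(G' x : X →L[ℝ] V)‖ ≤ C₁)
    (hboundinv : ∀ x, ‖((G' x).symm : V →L[ℝ] X)‖ ≤ Cinv) :
    ∀ x y : X, C₁⁻¹ * ‖G x - G y‖ ≤ ‖x - y‖ ∧ ‖x - y‖ ≤ Cinv * ‖G x - G y‖ := by
  intro x y
  have hCinv : 0 ≤ Cinv := (norm_nonneg _).trans (hboundinv x)
  have hG : IsLocalHomeomorph G := isLocalHomeomorph_of_hasStrictFDerivAt fun x =>
    hasStrictFDerivAt_of_hasFDerivAt_of_continuousAt (.of_forall hderiv) hcont.continuousAt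
  have hanti : AntilipschitzWith Cinv.toNNReal G :=
    hG.antilipschitzWith_of_hasFDerivAt hderiv fun x =>
      (Real.le_toNNReal_iff_coe_le hCinv).2 (hboundinv x)
  constructor
  · rw [inv_mul_le_iff₀ hC₁]
    exact convex_univ.norm_image_sub_le_of_norm_hasFDerivWithin_le
      (fun z _ => (hderiv z).hasFDerivWithinAt) (fun z _ => hbound z) trivial trivial
  · simpa [dist_eq_norm, Real.coe_toNNReal _ hCinv] using hanti.le_mul_dist x y

theorem stmt_11 {X V : Type*} [NormedAddCommGroup X] [NormedSpace ℝ X] [CompleteSpace X]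
    [NormedAddCommGroup V] [NormedSpace ℝ V] [CompleteSpace V]
    (G : X → V) (G' : X → X ≃L[ℝ] V)
    (hderiv : ∀ x, HasFDerivAt G (G' x : X →L[ℝ] V) x)
    (hcont : Continuous fun x => (G' x : X →L[ℝ] V))
    (C₁ Cinv : ℝ) (hC₁ : 0 < C₁)
    (hbound : ∀ x, ‖(G' x : X →L[ℝ] V)‖ ≤ C₁)
    (hboundinv : ∀ x, ‖((G' x).symm : V →L[ℝ] X)‖ ≤ Cinv) :
    ∀ x y : X, C₁⁻¹ * ‖G x - G y‖ ≤ ‖x - y‖ ∧ ‖x - y‖ ≤ Cinv * ‖G x - G y‖ :=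
  stmt_11_general G G' hderiv hcont C₁ Cinv hC₁ hbound hboundinv
end

section
/- Let $H = [0,h_1]\times\cdots\times[0,h_d]$ and let $f$ be such that $f$ and $\partial_{x_i}^{n_i} f$ lie in $L_\infty(H)$ for $i=1,\ldots,d$. Let $I[f]$ be the tensor-product polynomial interpolant of $f$ at grid points $\gamma_r^1 < \cdots < \gamma_r^{n_r}$ in direction $r$, with Lagrange basis $\mathcal{L}_r^j$. Then $\|f - I[f]\|_{L_\infty(H)} \leq \sum_{r=1}^d L_r^d \, h_r^{n_r} \|\partial_{x_r}^{n_r} f\|_{L_\infty(H)}$, where $L_r^d = \frac{\|\prod_{j=1}^{n_r}(\cdot - \gamma_r^j)\|_{L_\infty[0,h_r]}}{h_r^{n_r} n_r!} \prod_{q=r+1}^d \|\mathcal{L}_q\|_{L_\infty[0,h_q]}$ and $\mathcal{L}_q = \sum_i |\mathcal{L}_q^i|$. -/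
open Polynomial


open Finset

/-- Lagrange basis polynomial for nodes `γ 0, …, γ (n-1)`. -/
noncomputable def lagBasis (n : ℕ) (γ : ℕ → ℝ) (j : ℕ) (t : ℝ) : ℝ :=
  ∏ k ∈ (range n).erase j, (t - γ k) / (γ j - γ k)

/-- Lebesgue function of the nodes `γ 0, …, γ (n-1)`. -/
noncomputable def lebFun (n : ℕ) (γ : ℕ → ℝ) (t : ℝ) : ℝ :=
  ∑ j ∈ range n, |lagBasis n γ j t|

/-- Tensor-product Lagrange interpolant on a `d`-dimensional box. -/
noncomputable def tensorInterp (d : ℕ) (n : Fin d → ℕ) (γ : Fin d → ℕ → ℝ)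
    (f : (Fin d → ℝ) → ℝ) (x : Fin d → ℝ) : ℝ :=
  ∑ α : (∀ r : Fin d, Fin (n r)),
    f (fun r => γ r (α r)) * ∏ r, lagBasis (n r) (γ r) (α r) (x r)

/- helper: contDiff of polynomial eval -/
lemma contDiff_polyeval (p : ℝ[X]) : ContDiff ℝ (⊤:ℕ∞) fun t : ℝ => p.eval t := by
  induction p using Polynomial.induction_on' with
  | add p q hp hq => simpa using hp.add hq
  | monomial n a =>
      simp only [Polynomial.eval_monomial]
      exact (contDiff_id.pow n).const_smul a

lemma itd_polyeval (p : ℝ[X]) (n : ℕ) (x : ℝ) :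
    iteratedDeriv n (fun t : ℝ => p.eval t) x = (derivative^[n] p).eval x := by
  induction n generalizing p with
  | zero => simp
  | succ n ih =>
      rw [iteratedDeriv_succ']
      have : deriv (fun t : ℝ => p.eval t) = fun t : ℝ => (derivative p).eval t := by
        funext t; exact p.deriv
      rw [this, ih, Function.iterate_succ_apply]

lemma itd_sub {f g : ℝ → ℝ} (hf : ContDiff ℝ (⊤:ℕ∞) f) (hg : ContDiff ℝ (⊤:ℕ∞) g) (n : ℕ) (x : ℝ) :
    iteratedDeriv n (fun t => f t - g t) x = iteratedDeriv n f x - iteratedDeriv n g x := by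
  simp only [← iteratedDerivWithin_univ]
  exact iteratedDerivWithin_sub (Set.mem_univ x) uniqueDiffOn_univ
    ((hf.of_le (by exact_mod_cast le_top)).contDiffWithinAt) ((hg.of_le (by exact_mod_cast le_top)).contDiffWithinAt)

lemma itd_sum {ι : Type*} (s : Finset ι) (F : ι → ℝ → ℝ) (hF : ∀ i ∈ s, ContDiff ℝ (⊤:ℕ∞) (F i))
    (n : ℕ) (x : ℝ) :
    iteratedDeriv n (fun t => ∑ i ∈ s, F i t) x = ∑ i ∈ s, iteratedDeriv n (F i) x := by
  induction s using Finset.cons_induction with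
  | empty => simp [iteratedDeriv_eq_iteratedFDeriv, iteratedFDeriv_zero_fun]
  | cons a s ha ih =>
      simp only [Finset.sum_cons]
      have h2 : (fun t => F a t + ∑ i ∈ s, F i t) = (F a + fun u => ∑ i ∈ s, F i u) := rfl
      rw [h2]
      have hs : ContDiff ℝ (⊤:ℕ∞) fun u => ∑ i ∈ s, F i u :=
        ContDiff.sum fun i hi => hF i (Finset.mem_cons_of_mem hi)
      have := hF a (Finset.mem_cons_self a s)
      simp only [← iteratedDerivWithin_univ]
      rw [iteratedDerivWithin_add (Set.mem_univ x) uniqueDiffOn_univ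
        ((this.of_le (by exact_mod_cast le_top)).contDiffWithinAt) ((hs.of_le (by exact_mod_cast le_top)).contDiffWithinAt)]
      congr 1
      simp only [iteratedDerivWithin_univ]
      rw [ih fun i hi => hF i (Finset.mem_cons_of_mem hi)]

lemma iterated_rolle (m : ℕ) (F : ℝ → ℝ) (hF : ContDiff ℝ (⊤:ℕ∞) F) (s : Finset ℝ) (a b : ℝ)
    (hsub : ↑s ⊆ Set.Icc a b) (hcard : m + 1 ≤ s.card) (hzero : ∀ y ∈ s, F y = 0) :
    ∃ ξ ∈ Set.Icc a b, iteratedDeriv m F ξ = 0 := by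
  induction m generalizing F s with
  | zero =>
      obtain ⟨y, hy⟩ := Finset.card_pos.mp (by omega : 0 < s.card)
      exact ⟨y, hsub hy, by simpa [iteratedDeriv_zero] using hzero y hy⟩
  | succ m ih =>
      set c := s.card with hc
      have hc2 : m + 2 ≤ c := hcard
      let e := s.orderIsoOfFin rfl
      set u : Fin c → ℝ := fun i => (e i : ℝ) with hu
      have humono : StrictMono u := fun i j hij => e.lt_iff_lt.mpr hij
      have hus : ∀ i, u i ∈ s := fun i => (e i).2
      -- Rolle between consecutive points
      have hrolle : ∀ i : Fin (c - 1), ∃ ξ, ξ ∈ Set.Ioo (u ⟨i.1, by omega⟩) (u ⟨i.1 + 1, by omega⟩)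
          ∧ deriv F ξ = 0 := by
        intro i
        have hlt : u ⟨i.1, by omega⟩ < u ⟨i.1 + 1, by omega⟩ :=
          humono (by simp [Fin.lt_def])
        have := exists_deriv_eq_zero hlt hF.continuous.continuousOn
          (by rw [hzero _ (hus _), hzero _ (hus _)])
        obtain ⟨ξ, hξ1, hξ2⟩ := this
        exact ⟨ξ, hξ1, hξ2⟩
      choose ξ hξmem hξzero using hrolle
      have hξmono : StrictMono ξ := by
        intro i j hij
        calc ξ i < u ⟨i.1 + 1, by omega⟩ := (hξmem i).2
        _ ≤ u ⟨j.1, by omega⟩ := by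
              rcases eq_or_lt_of_le (show i.1 + 1 ≤ j.1 from hij) with h | h
              · exact le_of_eq (by congr 1; exact Fin.ext h)
              · exact le_of_lt (humono (by simp [Fin.lt_def]; omega))
        _ < ξ j := (hξmem j).1
      have hξicc : ∀ i, ξ i ∈ Set.Icc a b := by
        intro i
        have h1 := hsub (hus ⟨i.1, by omega⟩)
        have h2 := hsub (hus ⟨i.1 + 1, by omega⟩)
        exact ⟨le_of_lt (lt_of_le_of_lt h1.1 (hξmem i).1),
          le_of_lt (lt_of_lt_of_le (hξmem i).2 h2.2)⟩
      set s' : Finset ℝ := Finset.image ξ Finset.univ with hs'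
      have hcard' : m + 1 ≤ s'.card := by
        rw [hs', Finset.card_image_of_injective _ hξmono.injective, Finset.card_univ,
          Fintype.card_fin]
        omega
      have hsub' : ↑s' ⊆ Set.Icc a b := by
        intro y hy
        simp only [hs', Finset.coe_image, Set.mem_image] at hy
        obtain ⟨i, _, rfl⟩ := hy
        exact hξicc i
      have hzero' : ∀ y ∈ s', deriv F y = 0 := by
        intro y hy
        simp only [hs', Finset.mem_image] at hy
        obtain ⟨i, _, rfl⟩ := hy
        exact hξzero i
      have hF' : ContDiff ℝ (⊤:ℕ∞) (deriv F) := (contDiff_infty_iff_deriv.mp hF).2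
      obtain ⟨ζ, hζ1, hζ2⟩ := ih (deriv F) hF' s' hsub' hcard' hzero'
      exact ⟨ζ, hζ1, by rw [iteratedDeriv_succ']; exact hζ2⟩

lemma lagBasis_node (m : ℕ) (γ : ℕ → ℝ) (hmono : StrictMonoOn γ (Set.Iio m))
    {i j : ℕ} (hi : i < m) (hj : j < m) :
    lagBasis m γ j (γ i) = if i = j then 1 else 0 := by
  have hne : ∀ {a b : ℕ}, a < m → b < m → a ≠ b → γ a ≠ γ b := by
    intro a b ha hb hab
    rcases lt_or_gt_of_ne hab with h | h
    · exact ne_of_lt (hmono ha hb h)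
    · exact (ne_of_lt (hmono hb ha h)).symm
  rcases eq_or_ne i j with rfl | hij
  · simp only [if_pos rfl, lagBasis]
    refine Finset.prod_eq_one fun k hk => ?_
    rw [Finset.mem_erase, Finset.mem_range] at hk
    exact div_self (sub_ne_zero.mpr (hne hi hk.2 (Ne.symm hk.1)))
  · rw [if_neg hij, lagBasis]
    refine Finset.prod_eq_zero (Finset.mem_erase.mpr ⟨hij, Finset.mem_range.mpr hi⟩) ?_
    simp

lemma lagBasis_poly (m : ℕ) (γ : ℕ → ℝ) (j : ℕ) :
    lagBasis m γ j = fun t =>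
      (∏ k ∈ (range m).erase j, (C ((γ j - γ k)⁻¹) * (X - C (γ k)))).eval t := by
  funext t
  simp only [lagBasis, eval_prod, eval_mul, eval_sub, eval_C, eval_X, div_eq_inv_mul]

lemma lagBasis_contDiff (m : ℕ) (γ : ℕ → ℝ) (j : ℕ) :
    ContDiff ℝ (⊤:ℕ∞) (lagBasis m γ j) := by
  rw [lagBasis_poly]; exact contDiff_polyeval _

lemma lagBasis_cont (m : ℕ) (γ : ℕ → ℝ) (j : ℕ) : Continuous (lagBasis m γ j) :=
  (lagBasis_contDiff m γ j).continuous

/-- The univariate Lagrange interpolation error bound. -/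
lemma uni_err (m : ℕ) (hm : 1 ≤ m) (b : ℝ) (γ : ℕ → ℝ)
    (hmono : StrictMonoOn γ (Set.Iio m)) (hin : ∀ j < m, γ j ∈ Set.Icc 0 b)
    (φ : ℝ → ℝ) (hφ : ContDiff ℝ (⊤:ℕ∞) φ) (Cb : ℝ)
    (hC : ∀ s ∈ Set.Icc (0:ℝ) b, |iteratedDeriv m φ s| ≤ Cb)
    (t : ℝ) (ht : t ∈ Set.Icc (0:ℝ) b) :
    |φ t - ∑ j ∈ range m, φ (γ j) * lagBasis m γ j t|
      ≤ |∏ j ∈ range m, (t - γ j)| * Cb / (Nat.factorial m) := by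
  have hCb : 0 ≤ Cb := le_trans (abs_nonneg _) (hC t ht)
  set P : ℝ → ℝ := fun s => ∑ j ∈ range m, φ (γ j) * lagBasis m γ j s with hP
  have hPnode : ∀ i < m, P (γ i) = φ (γ i) := by
    intro i hi
    show ∑ j ∈ range m, φ (γ j) * lagBasis m γ j (γ i) = φ (γ i)
    rw [Finset.sum_eq_single i]
    · rw [lagBasis_node m γ hmono hi hi, if_pos rfl, mul_one]
    · intro j hj hji
      rw [lagBasis_node m γ hmono hi (Finset.mem_range.mp hj), if_neg (Ne.symm hji), mul_zero]
    · intro h; exact absurd (Finset.mem_range.mpr hi) h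
  by_cases hnode : ∃ i < m, t = γ i
  · obtain ⟨i, hi, rfl⟩ := hnode
    rw [show (∑ j ∈ range m, φ (γ j) * lagBasis m γ j (γ i)) = P (γ i) from rfl,
      hPnode i hi, sub_self, abs_zero]
    positivity
  · push_neg at hnode
    set w : ℝ → ℝ := fun s => ∏ j ∈ range m, (s - γ j) with hw
    have hwt : w t ≠ 0 := by
      rw [hw]
      exact Finset.prod_ne_zero_iff.mpr fun j hj =>
        sub_ne_zero.mpr (hnode j (Finset.mem_range.mp hj))
    set lam : ℝ := (φ t - P t) / w t with hlam
    -- polynomial pieces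
    set pP : ℝ[X] := ∑ j ∈ range m, C (φ (γ j)) *
      ∏ k ∈ (range m).erase j, (C ((γ j - γ k)⁻¹) * (X - C (γ k))) with hpP
    set pw : ℝ[X] := ∏ j ∈ range m, (X - C (γ j)) with hpw
    set q : ℝ[X] := pP + C lam * pw with hq
    have hPeval : ∀ s, P s = pP.eval s := by
      intro s
      rw [hP, hpP]
      simp only [eval_finset_sum, eval_mul, eval_C]
      refine Finset.sum_congr rfl fun j hj => ?_
      rw [lagBasis_poly]
    have hweval : ∀ s, w s = pw.eval s := by
      intro s; rw [hw, hpw]; simp [eval_prod]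
    set F : ℝ → ℝ := fun s => φ s - q.eval s with hF
    have hFq : ContDiff ℝ (⊤:ℕ∞) F := hφ.sub (contDiff_polyeval q)
    -- zeros of F
    set s₀ : Finset ℝ := insert t ((range m).image γ) with hs₀
    have htno : t ∉ (range m).image γ := by
      simp only [Finset.mem_image, Finset.mem_range]
      rintro ⟨i, hi, rfl⟩
      exact hnode i hi rfl
    have hgammainj : Set.InjOn γ ↑(range m) := by
      rw [Finset.coe_range]; exact hmono.injOn
    have hcard : m + 1 ≤ s₀.card := by
      rw [hs₀, Finset.card_insert_of_notMem htno, Finset.card_image_of_injOn hgammainj,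
        Finset.card_range]
    have hsub : ↑s₀ ⊆ Set.Icc (0:ℝ) b := by
      intro y hy
      simp only [hs₀, Finset.coe_insert, Set.mem_insert_iff, Finset.coe_image,
        Set.mem_image, Finset.mem_coe, Finset.mem_range] at hy
      rcases hy with rfl | ⟨i, hi, rfl⟩
      · exact ht
      · exact hin i hi
    have hFzero : ∀ y ∈ s₀, F y = 0 := by
      intro y hy
      rw [hs₀, Finset.mem_insert] at hy
      rcases hy with rfl | hy
      · rw [hF]
        simp only [hq, eval_add, eval_mul, eval_C, ← hPeval, ← hweval]
        rw [hlam, div_mul_cancel₀ _ hwt]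
        ring
      · simp only [Finset.mem_image, Finset.mem_range] at hy
        obtain ⟨i, hi, rfl⟩ := hy
        rw [hF]
        simp only [hq, eval_add, eval_mul, eval_C, ← hPeval, ← hweval]
        have : w (γ i) = 0 := by
          rw [hw]
          exact Finset.prod_eq_zero (Finset.mem_range.mpr hi) (by ring)
        rw [hPnode i hi, this]
        ring
    obtain ⟨ξ, hξicc, hξzero⟩ := iterated_rolle m F hFq s₀ 0 b hsub hcard hFzero
    -- compute the m-th derivative of F
    have hdq : derivative^[m] q = C (lam * (Nat.factorial m)) := by
      have hadd : ∀ (p₁ p₂ : ℝ[X]) (k : ℕ),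
          derivative^[k] (p₁ + p₂) = derivative^[k] p₁ + derivative^[k] p₂ := by
        intro p₁ p₂ k
        induction k generalizing p₁ p₂ with
        | zero => rfl
        | succ k ih => simp [Function.iterate_succ_apply, derivative_add, ih]
      rw [hq, hadd, iterate_derivative_C_mul]
      have h1 : derivative^[m] pP = 0 := by
        apply iterate_derivative_eq_zero
        calc pP.natDegree ≤ m - 1 := by
              rw [hpP]
              refine le_trans (Polynomial.natDegree_sum_le _ _) ?_
              rw [Finset.fold_max_le]
              constructor
              · omega
              · intro j hj
                refine le_trans (natDegree_C_mul_le _ _) ?_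
                refine le_trans (Polynomial.natDegree_prod_le _ _) ?_
                refine le_trans (Finset.sum_le_card_nsmul _ _ 1 fun k hk => ?_) ?_
                · refine le_trans (natDegree_C_mul_le _ _) ?_
                  simp [natDegree_X_sub_C]
                · simp only [smul_eq_mul, mul_one]
                  rw [Finset.card_erase_of_mem hj, Finset.card_range]
        _ < m := by omega
      have h2 : derivative^[m] pw = C (Nat.factorial m : ℝ) := by
        have hmon : pw.Monic := monic_prod_of_monic _ _ fun j _ => monic_X_sub_C (γ j)
        have hdeg : pw.natDegree = m := by
          rw [hpw, natDegree_prod_of_monic _ _ fun j _ => monic_X_sub_C (γ j)]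
          simp [natDegree_X_sub_C]
        have hle : (derivative^[m] pw).natDegree = 0 := by
          have := natDegree_iterate_derivative pw m
          omega
        have := Polynomial.eq_C_of_natDegree_le_zero (le_of_eq hle)
        rw [this, coeff_iterate_derivative]
        simp only [zero_add, Nat.descFactorial_self]
        rw [show pw.coeff m = 1 from by rw [← hdeg]; exact hmon.coeff_natDegree]
        simp [mul_comm]
      rw [h1, h2, zero_add, ← C_mul]
    have hFderiv : iteratedDeriv m F ξ = iteratedDeriv m φ ξ - lam * (Nat.factorial m) := by
      rw [hF, itd_sub hφ (contDiff_polyeval q), itd_polyeval, hdq, eval_C]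
    have hkey : iteratedDeriv m φ ξ = lam * (Nat.factorial m) := by
      have := hξzero
      rw [hFderiv] at this
      linarith
    -- conclude
    have herr : φ t - P t = lam * w t := by rw [hlam, div_mul_cancel₀ _ hwt]
    have herr' : φ t - ∑ j ∈ range m, φ (γ j) * lagBasis m γ j t = lam * w t := herr
    rw [herr', abs_mul]
    have hlamabs : |lam| ≤ Cb / (Nat.factorial m) := by
      have h1 : |iteratedDeriv m φ ξ| ≤ Cb := hC ξ hξicc
      rw [hkey, abs_mul, abs_of_nonneg (by positivity : (0:ℝ) ≤ (Nat.factorial m : ℝ))] at h1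
      rw [div_eq_inv_mul]
      have hfac : (0:ℝ) < (Nat.factorial m : ℝ) := by positivity
      calc |lam| = ((Nat.factorial m : ℝ))⁻¹ * (|lam| * (Nat.factorial m : ℝ)) := by
            field_simp
      _ ≤ ((Nat.factorial m : ℝ))⁻¹ * Cb := by
            apply mul_le_mul_of_nonneg_left h1 (by positivity)
    calc |lam| * |w t| ≤ (Cb / (Nat.factorial m)) * |w t| :=
          mul_le_mul_of_nonneg_right hlamabs (abs_nonneg _)
    _ = |w t| * Cb / (Nat.factorial m) := by ring


noncomputable def hybA (d : ℕ) (n : Fin d → ℕ) (γ : Fin d → ℕ → ℝ)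
    (f : (Fin d → ℝ) → ℝ) (k : ℕ) (x : Fin d → ℝ) : ℝ :=
  ∑ α : (∀ r : Fin d, Fin (n r)),
    f (fun r : Fin d => if k ≤ (r : ℕ) then γ r (α r) else x r) *
      ∏ r ∈ univ.filter (fun r : Fin d => k ≤ (r : ℕ)), lagBasis (n r) (γ r) (α r) (x r)

lemma multi {d : ℕ} (n : Fin d → ℕ) (k : Fin d) (U : Fin (n k) → (∀ r, Fin (n r)) → ℝ)
    (hU : ∀ j α β, (∀ r, r ≠ k → α r = β r) → U j α = U j β) :
    ∑ j, ∑ α : (∀ r, Fin (n r)), U j α = (n k : ℝ) * ∑ α : (∀ r, Fin (n r)), U (α k) α := by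
  classical
  set e := Equiv.piSplitAt k (fun r => Fin (n r)) with he
  have hsymm_k : ∀ p, e.symm p k = p.1 := by
    intro p; simp [he, Equiv.piSplitAt]
  have hsymm_ne : ∀ (p) (r : Fin d) (hr : r ≠ k), e.symm p r = p.2 ⟨r, hr⟩ := by
    intro p r hr; simp [he, Equiv.piSplitAt, hr]
  have hsum : ∀ (G : (∀ r, Fin (n r)) → ℝ),
      ∑ α : (∀ r, Fin (n r)), G α
        = ∑ p : Fin (n k) × (∀ r : {r // r ≠ k}, Fin (n r.1)), G (e.symm p) :=
    fun G => (Equiv.sum_comp e.symm G).symm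
  have hindep : ∀ (j : Fin (n k)) (v w : Fin (n k)) ρ,
      U j (e.symm (v, ρ)) = U j (e.symm (w, ρ)) := by
    intro j v w ρ
    exact hU j _ _ fun r hr => by rw [hsymm_ne _ r hr, hsymm_ne _ r hr]
  calc ∑ j, ∑ α : (∀ r, Fin (n r)), U j α
      = ∑ j, ∑ p : Fin (n k) × (∀ r : {r // r ≠ k}, Fin (n r.1)), U j (e.symm p) := by
        exact Finset.sum_congr rfl fun j _ => hsum (U j)
    _ = ∑ j, ∑ v : Fin (n k), ∑ ρ, U j (e.symm (v, ρ)) := by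
        exact Finset.sum_congr rfl fun j _ => Fintype.sum_prod_type (f := fun p => U j (e.symm p))
    _ = ∑ j, ∑ _v : Fin (n k), ∑ ρ, U j (e.symm (j, ρ)) := by
        refine Finset.sum_congr rfl fun j _ => Finset.sum_congr rfl fun v _ =>
          Finset.sum_congr rfl fun ρ _ => hindep j v j ρ
    _ = (n k : ℝ) * ∑ j, ∑ ρ, U j (e.symm (j, ρ)) := by
        rw [Finset.mul_sum]
        refine Finset.sum_congr rfl fun j _ => ?_
        rw [Finset.sum_const, Finset.card_univ, Fintype.card_fin, nsmul_eq_mul]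
    _ = (n k : ℝ) * ∑ α : (∀ r, Fin (n r)), U (α k) α := by
        congr 1
        rw [hsum (fun α => U (α k) α)]
        rw [Fintype.sum_prod_type]
        exact Finset.sum_congr rfl fun v _ => Finset.sum_congr rfl fun ρ _ => by
          rw [hsymm_k]

lemma hybA_last (d : ℕ) (n : Fin d → ℕ) (γ : Fin d → ℕ → ℝ) (f : (Fin d → ℝ) → ℝ)
    (x : Fin d → ℝ) : hybA d n γ f d x = (∏ r, (n r : ℝ)) * f x := by
  have h1 : (univ.filter fun r : Fin d => d ≤ (r : ℕ)) = ∅ :=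
    Finset.filter_false_of_mem fun r _ => by omega
  have h2 : ∀ α : (∀ r : Fin d, Fin (n r)),
      (fun r : Fin d => if d ≤ (r : ℕ) then γ r (α r) else x r) = x := by
    intro α; funext r
    rw [if_neg (by omega : ¬ d ≤ (r : ℕ))]
  rw [hybA]
  simp only [h1, Finset.prod_empty, mul_one]
  rw [Finset.sum_congr rfl fun α _ => by rw [h2 α]]
  rw [Finset.sum_const, Finset.card_univ, Fintype.card_pi, nsmul_eq_mul]
  simp

lemma hybA_zero (d : ℕ) (n : Fin d → ℕ) (γ : Fin d → ℕ → ℝ) (f : (Fin d → ℝ) → ℝ)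
    (x : Fin d → ℝ) : hybA d n γ f 0 x = tensorInterp d n γ f x := by
  rw [hybA, tensorInterp]
  simp

lemma hybA_step (d : ℕ) (n : Fin d → ℕ) (γ : Fin d → ℕ → ℝ) (f : (Fin d → ℝ) → ℝ)
    (x : Fin d → ℝ) (k : ℕ) (hk : k < d) :
    (n ⟨k, hk⟩ : ℝ) * hybA d n γ f k x =
      ∑ j : Fin (n ⟨k, hk⟩),
        hybA d n γ f (k + 1) (Function.update x ⟨k, hk⟩ (γ ⟨k, hk⟩ j)) *
          lagBasis (n ⟨k, hk⟩) (γ ⟨k, hk⟩) j (x ⟨k, hk⟩) := by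
  classical
  set kF : Fin d := ⟨k, hk⟩ with hkF
  have hne : ∀ r : Fin d, k + 1 ≤ (r : ℕ) → r ≠ kF := by
    intro r hr hrk
    rw [hrk] at hr
    simp [hkF] at hr
  set F1 := univ.filter (fun r : Fin d => k + 1 ≤ (r : ℕ)) with hF1
  set U : Fin (n kF) → (∀ r, Fin (n r)) → ℝ := fun j α =>
    f (fun r : Fin d => if k + 1 ≤ (r : ℕ) then γ r (α r)
        else Function.update x kF (γ kF j) r) *
      ((∏ r ∈ F1, lagBasis (n r) (γ r) (α r) (x r)) *
        lagBasis (n kF) (γ kF) j (x kF)) with hUdef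
  have hRHS : (∑ j : Fin (n kF),
      hybA d n γ f (k + 1) (Function.update x kF (γ kF j) ) *
        lagBasis (n kF) (γ kF) j (x kF)) = ∑ j, ∑ α : (∀ r, Fin (n r)), U j α := by
    refine Finset.sum_congr rfl fun j _ => ?_
    rw [hybA, Finset.sum_mul]
    refine Finset.sum_congr rfl fun α _ => ?_
    rw [hUdef]
    have hprod : ∏ r ∈ F1, lagBasis (n r) (γ r) (α r) (Function.update x kF (γ kF j) r)
        = ∏ r ∈ F1, lagBasis (n r) (γ r) (α r) (x r) := by
      refine Finset.prod_congr rfl fun r hr => ?_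
      rw [hF1, Finset.mem_filter] at hr
      rw [Function.update_of_ne (hne r hr.2)]
    simp only [← hF1]
    rw [hprod]
    ring
  have hU : ∀ j α β, (∀ r, r ≠ kF → α r = β r) → U j α = U j β := by
    intro j α β hab
    rw [hUdef]
    simp only []
    congr 1
    · congr 1
      funext r
      by_cases hr : k + 1 ≤ (r : ℕ)
      · rw [if_pos hr, if_pos hr, hab r (hne r hr)]
      · rw [if_neg hr, if_neg hr]
    · congr 1
      refine Finset.prod_congr rfl fun r hr => ?_
      rw [hF1, Finset.mem_filter] at hr
      rw [hab r (hne r hr.2)]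
  rw [hRHS, multi n kF U hU]
  congr 1
  rw [hybA]
  refine Finset.sum_congr rfl fun α _ => ?_
  rw [hUdef]
  simp only []
  have harg : (fun r : Fin d => if k + 1 ≤ (r : ℕ) then γ r (α r)
      else Function.update x kF (γ kF (α kF)) r)
      = (fun r : Fin d => if k ≤ (r : ℕ) then γ r (α r) else x r) := by
    funext r
    by_cases hr : k + 1 ≤ (r : ℕ)
    · rw [if_pos hr, if_pos (by omega : k ≤ (r : ℕ))]
    · rw [if_neg hr]
      by_cases hrk : r = kF
      · subst hrk
        rw [Function.update_self, if_pos (by simp [hkF])]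
      · rw [Function.update_of_ne hrk, if_neg (by
          intro hcon
          apply hrk
          have : (r : ℕ) = k := by omega
          exact Fin.ext (by simp [hkF, this]))]
  have hfilter : univ.filter (fun r : Fin d => k ≤ (r : ℕ)) = insert kF F1 := by
    ext r
    simp only [Finset.mem_filter, Finset.mem_insert, Finset.mem_univ, true_and, hF1]
    constructor
    · intro hr
      rcases eq_or_lt_of_le hr with h | h
      · left; exact Fin.ext (by simp [hkF, ← h])
      · right; omega
    · rintro (rfl | hr)
      · simp [hkF]
      · omega
  have hnotmem : kF ∉ F1 := by
    rw [hF1, Finset.mem_filter]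
    rintro ⟨-, hcon⟩
    simp [hkF] at hcon
  rw [harg, hfilter, Finset.prod_insert hnotmem]
  ring

lemma itd_cmul (c : ℝ) {g : ℝ → ℝ} (hg : ContDiff ℝ (⊤:ℕ∞) g) (n : ℕ) (x : ℝ) :
    iteratedDeriv n (fun t => c * g t) x = c * iteratedDeriv n g x := by
  simp only [← iteratedDerivWithin_univ]
  exact iteratedDerivWithin_const_mul (Set.mem_univ x) uniqueDiffOn_univ c
    ((hg.of_le (by exact_mod_cast le_top)).contDiffWithinAt)

lemma lebFun_nonneg (m : ℕ) (γ : ℕ → ℝ) (t : ℝ) : 0 ≤ lebFun m γ t :=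
  Finset.sum_nonneg fun j _ => abs_nonneg _

lemma lebFun_cont (m : ℕ) (γ : ℕ → ℝ) : Continuous (lebFun m γ) := by
  unfold lebFun
  exact continuous_finset_sum _ fun j _ => (lagBasis_cont m γ j).abs

lemma le_csSup_image {u : ℝ → ℝ} (hu : Continuous u) {b t : ℝ} (ht : t ∈ Set.Icc (0:ℝ) b) :
    u t ≤ sSup (u '' Set.Icc (0:ℝ) b) :=
  le_csSup (IsCompact.bddAbove_image isCompact_Icc hu.continuousOn) ⟨t, ht, rfl⟩

lemma sum_prod_filter {d : ℕ} (n : Fin d → ℕ) (S : Finset (Fin d)) (G : Fin d → ℕ → ℝ) :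
    ∑ α : (∀ r : Fin d, Fin (n r)), ∏ r ∈ S, G r (α r) =
      (∏ r ∈ univ \ S, (n r : ℝ)) * ∏ r ∈ S, ∑ j ∈ range (n r), G r j := by
  classical
  have hS : univ.filter (fun r : Fin d => r ∈ S) = S := by ext r; simp
  have hSc : univ.filter (fun r : Fin d => ¬ r ∈ S) = univ \ S := by ext r; simp
  calc ∑ α : (∀ r : Fin d, Fin (n r)), ∏ r ∈ S, G r (α r)
      = ∑ α : (∀ r : Fin d, Fin (n r)), ∏ r, (if r ∈ S then G r (α r) else 1) := by
        refine Finset.sum_congr rfl fun α _ => ?_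
        rw [← Finset.prod_filter, hS]
    _ = ∑ α ∈ Fintype.piFinset (fun _ : Fin d => (univ : Finset (Fin (n _)))),
          ∏ r, (if r ∈ S then G r (α r) else 1) := by
        rw [Fintype.piFinset_univ]
    _ = ∏ r, ∑ j : Fin (n r), (if r ∈ S then G r j else 1) := by
        rw [Finset.prod_univ_sum]
    _ = ∏ r, (if r ∈ S then ∑ j ∈ range (n r), G r j else (n r : ℝ)) := by
        refine Finset.prod_congr rfl fun r _ => ?_
        by_cases hr : r ∈ S
        · simp only [hr, if_true]
          rw [← Fin.sum_univ_eq_sum_range (fun j => G r j) (n r)]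
        · simp [hr]
    _ = (∏ r ∈ univ \ S, (n r : ℝ)) * ∏ r ∈ S, ∑ j ∈ range (n r), G r j := by
        rw [Finset.prod_ite, hS, hSc, mul_comm]

lemma hybA_slice (d : ℕ) (n : Fin d → ℕ) (γ : Fin d → ℕ → ℝ) (f : (Fin d → ℝ) → ℝ)
    (x : Fin d → ℝ) (k : ℕ) (hk : k < d) (t : ℝ) :
    hybA d n γ f (k + 1) (Function.update x ⟨k, hk⟩ t) =
      ∑ α : (∀ r : Fin d, Fin (n r)),
        (∏ r ∈ univ.filter (fun r : Fin d => k + 1 ≤ (r : ℕ)),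
            lagBasis (n r) (γ r) (α r) (x r)) *
          f (Function.update
              (fun r : Fin d => if k + 1 ≤ (r : ℕ) then γ r (α r) else x r) ⟨k, hk⟩ t) := by
  classical
  set kF : Fin d := ⟨k, hk⟩ with hkF
  have hne : ∀ r : Fin d, k + 1 ≤ (r : ℕ) → r ≠ kF := by
    intro r hr hrk
    rw [hrk] at hr
    simp [hkF] at hr
  rw [hybA]
  refine Finset.sum_congr rfl fun α _ => ?_
  have harg : (fun r : Fin d => if k + 1 ≤ (r : ℕ) then γ r (α r)
      else Function.update x kF t r)
      = Function.update (fun r : Fin d => if k + 1 ≤ (r : ℕ) then γ r (α r) else x r) kF t := by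
    funext r
    by_cases hrk : r = kF
    · subst hrk
      rw [Function.update_self, if_neg (by simp [hkF]), Function.update_self]
    · rw [Function.update_of_ne hrk, Function.update_of_ne hrk]
  have hprod : ∏ r ∈ univ.filter (fun r : Fin d => k + 1 ≤ (r : ℕ)),
      lagBasis (n r) (γ r) (α r) (Function.update x kF t r)
      = ∏ r ∈ univ.filter (fun r : Fin d => k + 1 ≤ (r : ℕ)),
        lagBasis (n r) (γ r) (α r) (x r) := by
    refine Finset.prod_congr rfl fun r hr => ?_
    rw [Finset.mem_filter] at hr
    rw [Function.update_of_ne (hne r hr.2)]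
  rw [harg, hprod, mul_comm]

lemma slice_deriv_bound (d : ℕ) (h : Fin d → ℝ) (n : Fin d → ℕ) (γ : Fin d → ℕ → ℝ)
    (hin : ∀ r, ∀ j < n r, γ r j ∈ Set.Icc 0 (h r))
    (f : (Fin d → ℝ) → ℝ) (hf : ContDiff ℝ (⊤:ℕ∞) f) (M : Fin d → ℝ)
    (hM : ∀ r, ∀ x ∈ Set.univ.pi fun r => Set.Icc (0:ℝ) (h r),
      |iteratedDeriv (n r) (fun t => f (Function.update x r t)) (x r)| ≤ M r)
    (x : Fin d → ℝ) (hx : x ∈ Set.univ.pi fun r => Set.Icc (0:ℝ) (h r))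
    (k : ℕ) (hk : k < d) (t : ℝ) (ht : t ∈ Set.Icc (0:ℝ) (h ⟨k, hk⟩)) :
    |iteratedDeriv (n ⟨k, hk⟩)
        (fun t => hybA d n γ f (k + 1) (Function.update x ⟨k, hk⟩ t)) t|
      ≤ (∏ r ∈ univ.filter (fun r : Fin d => (r : ℕ) < k + 1), (n r : ℝ)) *
          (M ⟨k, hk⟩ *
            ∏ r ∈ univ.filter (fun r : Fin d => k + 1 ≤ (r : ℕ)),
              lebFun (n r) (γ r) (x r)) := by
  classical
  set kF : Fin d := ⟨k, hk⟩ with hkF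
  set F1 := univ.filter (fun r : Fin d => k + 1 ≤ (r : ℕ)) with hF1
  set z : (∀ r : Fin d, Fin (n r)) → (Fin d → ℝ) := fun α =>
    (fun r : Fin d => if k + 1 ≤ (r : ℕ) then γ r (α r) else x r) with hz
  set c : (∀ r : Fin d, Fin (n r)) → ℝ := fun α =>
    ∏ r ∈ F1, lagBasis (n r) (γ r) (α r) (x r) with hc
  have hslice : (fun t => hybA d n γ f (k + 1) (Function.update x kF t))
      = fun t => ∑ α : (∀ r : Fin d, Fin (n r)), c α * f (Function.update (z α) kF t) := by
    funext t
    exact hybA_slice d n γ f x k hk t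
  have hterm : ∀ α : (∀ r : Fin d, Fin (n r)),
      ContDiff ℝ (⊤:ℕ∞) (fun t => f (Function.update (z α) kF t)) := by
    intro α
    exact hf.comp (contDiff_update _ (z α) kF)
  rw [hslice, itd_sum univ _ (fun α _ => contDiff_const.mul (hterm α))]
  have hbound : ∀ α : (∀ r : Fin d, Fin (n r)),
      |iteratedDeriv (n kF) (fun t => c α * f (Function.update (z α) kF t)) t|
        ≤ |c α| * M kF := by
    intro α
    rw [itd_cmul (c α) (hterm α), abs_mul]
    refine mul_le_mul_of_nonneg_left ?_ (abs_nonneg _)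
    have hpt : Function.update (z α) kF t ∈ Set.univ.pi fun r => Set.Icc (0:ℝ) (h r) := by
      intro r _
      by_cases hrk : r = kF
      · subst hrk; rw [Function.update_self]; exact ht
      · rw [Function.update_of_ne hrk, hz]
        by_cases hr : k + 1 ≤ (r : ℕ)
        · simp only [if_pos hr]
          exact hin r (α r) (α r).isLt
        · simp only [if_neg hr]
          exact hx r (Set.mem_univ r)
    have := hM kF (Function.update (z α) kF t) hpt
    have heq : (fun s => f (Function.update (Function.update (z α) kF t) kF s))
        = fun s => f (Function.update (z α) kF s) := by
      funext s
      rw [Function.update_idem]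
    rw [heq, Function.update_self] at this
    exact this
  calc |∑ α : (∀ r : Fin d, Fin (n r)),
        iteratedDeriv (n kF) (fun t => c α * f (Function.update (z α) kF t)) t|
      ≤ ∑ α : (∀ r : Fin d, Fin (n r)), |c α| * M kF := by
        refine le_trans (Finset.abs_sum_le_sum_abs _ _) ?_
        exact Finset.sum_le_sum fun α _ => hbound α
    _ = (∑ α : (∀ r : Fin d, Fin (n r)), ∏ r ∈ F1, |lagBasis (n r) (γ r) (α r) (x r)|) * M kF := by
        rw [← Finset.sum_mul]
        congr 1
        exact Finset.sum_congr rfl fun α _ => by rw [hc, Finset.abs_prod]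
    _ = ((∏ r ∈ univ \ F1, (n r : ℝ)) * ∏ r ∈ F1, lebFun (n r) (γ r) (x r)) * M kF := by
        congr 1
        rw [sum_prod_filter n F1 (fun r j => |lagBasis (n r) (γ r) j (x r)|)]
        rfl
    _ = (∏ r ∈ univ.filter (fun r : Fin d => (r : ℕ) < k + 1), (n r : ℝ)) *
          (M kF * ∏ r ∈ F1, lebFun (n r) (γ r) (x r)) := by
        have : univ \ F1 = univ.filter (fun r : Fin d => (r : ℕ) < k + 1) := by
          ext r
          simp only [Finset.mem_sdiff, Finset.mem_filter, Finset.mem_univ, true_and, hF1,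
            Finset.mem_filter]
          omega
        rw [this]; ring

/-- Mößner–Reif error bound for tensor-product Lagrange interpolation on a box. -/
theorem stmt_14 (d : ℕ) (h : Fin d → ℝ) (hh : ∀ r, 0 < h r)
    (n : Fin d → ℕ) (hn : ∀ r, 1 ≤ n r)
    (γ : Fin d → ℕ → ℝ)
    (hmono : ∀ r, StrictMonoOn (γ r) (Set.Iio (n r)))
    (hin : ∀ r, ∀ j < n r, γ r j ∈ Set.Icc 0 (h r))
    (f : (Fin d → ℝ) → ℝ) (hf : ContDiff ℝ (⊤ : ℕ∞) f)
    (M : Fin d → ℝ)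
    (hM : ∀ r, ∀ x ∈ Set.univ.pi fun r => Set.Icc (0:ℝ) (h r),
      |iteratedDeriv (n r) (fun t => f (Function.update x r t)) (x r)| ≤ M r) :
    ∀ x ∈ Set.univ.pi fun r => Set.Icc (0:ℝ) (h r),
      |f x - tensorInterp d n γ f x| ≤
        ∑ r,
          (sSup ((fun t => |∏ j ∈ range (n r), (t - γ r j)|) '' Set.Icc (0:ℝ) (h r)) /
              ((h r) ^ (n r) * (Nat.factorial (n r) : ℝ)) *
            ∏ q ∈ univ.filter fun q => r < q,
              sSup (lebFun (n q) (γ q) '' Set.Icc (0:ℝ) (h q))) *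
          (h r) ^ (n r) * M r := by
  classical
  intro x hx
  have hf' : ContDiff ℝ (⊤:ℕ∞) f := hf.of_le (by simp)
  set D : ℕ → ℝ := fun k => ∏ r ∈ univ.filter (fun r : Fin d => (r : ℕ) < k), (n r : ℝ)
    with hD
  have hDpos : ∀ k, 0 < D k := fun k =>
    Finset.prod_pos fun r _ => by exact_mod_cast Nat.lt_of_lt_of_le Nat.zero_lt_one (hn r)
  -- nonnegativity of various quantities
  have hM0 : ∀ r, 0 ≤ M r := fun r => le_trans (abs_nonneg _) (hM r x hx)
  set Λ : Fin d → ℝ := fun q => sSup (lebFun (n q) (γ q) '' Set.Icc (0:ℝ) (h q)) with hΛ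
  have hΛge : ∀ q : Fin d, lebFun (n q) (γ q) (x q) ≤ Λ q := fun q =>
    le_csSup_image (lebFun_cont (n q) (γ q)) (hx q (Set.mem_univ q))
  have hΛ0 : ∀ q : Fin d, 0 ≤ Λ q := fun q => le_trans (lebFun_nonneg _ _ _) (hΛge q)
  -- telescoping
  have hfx : f x = hybA d n γ f d x / D d := by
    rw [hybA_last]
    have hDd : D d = ∏ r, (n r : ℝ) := by
      have h0 : univ.filter (fun r : Fin d => (r : ℕ) < d) = univ :=
        Finset.filter_true_of_mem fun r _ => r.isLt
      show (∏ r ∈ univ.filter (fun r : Fin d => (r : ℕ) < d), (n r : ℝ)) = ∏ r, (n r : ℝ)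
      rw [h0]
    rw [hDd, mul_div_cancel_left₀]
    exact ne_of_gt (by rw [← hDd]; exact hDpos d)
  have hIx : tensorInterp d n γ f x = hybA d n γ f 0 x / D 0 := by
    rw [← hybA_zero]
    have : D 0 = 1 := by
      have h0 : univ.filter (fun r : Fin d => (r : ℕ) < 0) = ∅ :=
        Finset.filter_false_of_mem fun r _ => by omega
      show (∏ r ∈ univ.filter (fun r : Fin d => (r : ℕ) < 0), (n r : ℝ)) = 1
      rw [h0, Finset.prod_empty]
    rw [this, div_one]
  have htel : f x - tensorInterp d n γ f x =
      ∑ k ∈ range d, (hybA d n γ f (k + 1) x / D (k + 1) - hybA d n γ f k x / D k) := by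
    rw [Finset.sum_range_sub (f := fun k => hybA d n γ f k x / D k), ← hfx, ← hIx]
  have htel2 : f x - tensorInterp d n γ f x =
      ∑ i : Fin d, (hybA d n γ f ((i : ℕ) + 1) x / D ((i : ℕ) + 1)
        - hybA d n γ f (i : ℕ) x / D (i : ℕ)) := by
    rw [htel, ← Fin.sum_univ_eq_sum_range (fun k =>
      hybA d n γ f (k + 1) x / D (k + 1) - hybA d n γ f k x / D k) d]
  rw [htel2]
  refine le_trans (Finset.abs_sum_le_sum_abs _ _) (Finset.sum_le_sum fun i _ => ?_)
  -- per-direction bound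
  set k : ℕ := (i : ℕ) with hkdef
  have hk : k < d := i.isLt
  set m : ℕ := n i with hm
  set F1 := univ.filter (fun r : Fin d => k + 1 ≤ (r : ℕ)) with hF1
  have hDstep : D (k + 1) = (m : ℝ) * D k := by
    have hfilter : univ.filter (fun r : Fin d => (r : ℕ) < k + 1)
        = insert i (univ.filter (fun r : Fin d => (r : ℕ) < k)) := by
      ext r
      simp only [Finset.mem_filter, Finset.mem_insert, Finset.mem_univ, true_and]
      constructor
      · intro hr
        rcases Nat.lt_or_ge (r : ℕ) k with hlt | hge
        · right; exact hlt
        · left; exact Fin.ext (by omega)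
      · rintro (rfl | hr) <;> omega
    have hnotmem : i ∉ univ.filter (fun r : Fin d => (r : ℕ) < k) := by
      simp [hkdef]
    show (∏ r ∈ univ.filter (fun r : Fin d => (r : ℕ) < k + 1), (n r : ℝ))
      = (m : ℝ) * ∏ r ∈ univ.filter (fun r : Fin d => (r : ℕ) < k), (n r : ℝ)
    rw [hfilter, Finset.prod_insert hnotmem]
  -- the univariate function
  set φ : ℝ → ℝ := fun t =>
    (D (k + 1))⁻¹ * hybA d n γ f (k + 1) (Function.update x i t) with hφdef
  have hslice : (fun t => hybA d n γ f (k + 1) (Function.update x i t))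
      = fun t => ∑ α : (∀ r : Fin d, Fin (n r)),
        (∏ r ∈ F1, lagBasis (n r) (γ r) (α r) (x r)) *
          f (Function.update
            (fun r : Fin d => if k + 1 ≤ (r : ℕ) then γ r (α r) else x r) i t) := by
    funext t
    have := hybA_slice d n γ f x k hk t
    simpa only [Fin.eta] using this
  have hsliceCD : ContDiff ℝ (⊤:ℕ∞) (fun t => hybA d n γ f (k + 1) (Function.update x i t)) := by
    rw [hslice]
    exact ContDiff.sum fun α _ => contDiff_const.mul (hf'.comp (contDiff_update _ _ i))
  have hφCD : ContDiff ℝ (⊤:ℕ∞) φ := contDiff_const.mul hsliceCD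
  -- value identification
  have hval : hybA d n γ f (k + 1) x / D (k + 1) - hybA d n γ f k x / D k
      = φ (x i) - ∑ j ∈ range m, φ (γ i j) * lagBasis m (γ i) j (x i) := by
    have h1 : φ (x i) = hybA d n γ f (k + 1) x / D (k + 1) := by
      rw [hφdef]
      simp only [Function.update_eq_self]
      rw [inv_mul_eq_div]
    have hstep := hybA_step d n γ f x k hk
    have h2 : ∑ j ∈ range m, φ (γ i j) * lagBasis m (γ i) j (x i)
        = hybA d n γ f k x / D k := by
      have h3 : ∑ j ∈ range m, φ (γ i j) * lagBasis m (γ i) j (x i)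
          = (D (k + 1))⁻¹ * ∑ j : Fin m,
            hybA d n γ f (k + 1) (Function.update x i (γ i (j : ℕ))) *
              lagBasis m (γ i) (j : ℕ) (x i) := by
        rw [Fin.sum_univ_eq_sum_range (fun jn =>
          hybA d n γ f (k + 1) (Function.update x i (γ i jn)) *
            lagBasis m (γ i) jn (x i)) m]
        rw [Finset.mul_sum]
        refine Finset.sum_congr rfl fun j _ => ?_
        rw [hφdef]
        ring
      rw [h3, ← hstep, hDstep]
      have hm0 : (m : ℝ) ≠ 0 := by
        have := hn i; rw [hm]; positivity
      have hnn : ((n ⟨k, hk⟩ : ℕ) : ℝ) ≠ 0 := hm0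
      have hD0 : D k ≠ 0 := ne_of_gt (hDpos k)
      field_simp
      ring
    rw [h1, h2]
  rw [hval]
  -- derivative bound
  set Cb : ℝ := M i * ∏ q ∈ F1, Λ q with hCb
  have hCb0 : 0 ≤ Cb := mul_nonneg (hM0 i) (Finset.prod_nonneg fun q _ => hΛ0 q)
  have hC : ∀ t ∈ Set.Icc (0:ℝ) (h i), |iteratedDeriv m φ t| ≤ Cb := by
    intro t ht
    have hsdb := slice_deriv_bound d h n γ hin f hf' M hM x hx k hk t ht
    have hDval : (∏ r ∈ univ.filter (fun r : Fin d => (r : ℕ) < k + 1), (n r : ℝ))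
        = D (k + 1) := rfl
    rw [hDval] at hsdb
    have hitd : iteratedDeriv m φ t = (D (k + 1))⁻¹ *
        iteratedDeriv m (fun t => hybA d n γ f (k + 1) (Function.update x i t)) t := by
      rw [hφdef]
      exact itd_cmul _ hsliceCD m t
    rw [hitd, abs_mul, abs_of_nonneg (le_of_lt (inv_pos.mpr (hDpos (k + 1))))]
    calc (D (k + 1))⁻¹ *
          |iteratedDeriv m (fun t => hybA d n γ f (k + 1) (Function.update x i t)) t|
        ≤ (D (k + 1))⁻¹ * (D (k + 1) * (M i * ∏ r ∈ F1, lebFun (n r) (γ r) (x r))) := by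
          refine mul_le_mul_of_nonneg_left hsdb (le_of_lt (inv_pos.mpr (hDpos (k + 1))))
      _ = M i * ∏ r ∈ F1, lebFun (n r) (γ r) (x r) := by
          exact inv_mul_cancel_left₀ (ne_of_gt (hDpos (k + 1))) _
      _ ≤ Cb := by
          rw [hCb]
          refine mul_le_mul_of_nonneg_left ?_ (hM0 i)
          exact Finset.prod_le_prod (fun q _ => lebFun_nonneg _ _ _) fun q _ => hΛge q
  -- apply the univariate error bound
  have huni := uni_err m (hn i) (h i) (γ i) (hmono i) (hin i) φ hφCD Cb hC (x i)
    (hx i (Set.mem_univ i))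
  refine le_trans huni ?_
  -- pass to sups and rearrange
  set W : ℝ := sSup ((fun t => |∏ j ∈ range m, (t - γ i j)|) '' Set.Icc (0:ℝ) (h i)) with hW
  have hWcont : Continuous (fun t => |∏ j ∈ range m, (t - γ i j)|) := by
    refine Continuous.abs ?_
    exact continuous_finset_prod _ fun j _ => continuous_id.sub continuous_const
  have hWge : |∏ j ∈ range m, (x i - γ i j)| ≤ W :=
    le_csSup_image hWcont (hx i (Set.mem_univ i))
  have hfpos : (0:ℝ) < (Nat.factorial m : ℝ) := by positivity
  have hstep2 : |∏ j ∈ range m, (x i - γ i j)| * Cb / (Nat.factorial m)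
      ≤ W * Cb / (Nat.factorial m) := by
    exact (div_le_div_iff_of_pos_right hfpos).mpr (mul_le_mul_of_nonneg_right hWge hCb0)
  refine le_trans hstep2 ?_
  -- final algebraic identification
  have hFeq : univ.filter (fun q : Fin d => i < q) = F1 := by
    ext q
    simp only [Finset.mem_filter, Finset.mem_univ, true_and, hF1, Fin.lt_def]
    omega
  have hhm : (h i) ^ m ≠ 0 := pow_ne_zero _ (ne_of_gt (hh i))
  rw [hCb, hFeq.symm] at *
  have : W / ((h i) ^ (n i) * (Nat.factorial (n i) : ℝ)) *
        (∏ q ∈ univ.filter (fun q : Fin d => i < q), Λ q) * (h i) ^ (n i) * M i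
      = W * (M i * ∏ q ∈ univ.filter (fun q : Fin d => i < q), Λ q) / (Nat.factorial m) := by
    rw [hm]
    have hh' : h i ≠ 0 := ne_of_gt (hh i)
    field_simp
  rw [hW, hΛ] at this
  rw [← this]
end
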